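/- arXiv:2209.04209 — 2 statements merged into one kernel-verified Lean document; each statement's English description precedes it below -/
import Mathlib

section
/- Let a > 0, N ∈ ℕ, and let φ ∈ C_c^∞(ℝ) be supported in [a,+∞). Then for every (z,t) ∈ ℂⁿ × ℝ, |(|z|² − it)^N ∫_ℝ φ(ξ) e^{−ξ|z|²} e^{iξt} dξ| ≤ e^{−a|z|²} ∫_ℝ |φ^{(N)}(ξ)| dξ, where φ^{(N)} denotes the N-th derivative of φ. -/
open MeasureTheory Complex Filter
open scoped ContDiff ENNReal

noncomputable section

abbrev Hgrp (n : ℕ) := (Fin n → ℂ) × ℝ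

def nsq {n : ℕ} (z : Fin n → ℂ) : ℝ := ∑ j, Complex.normSq (z j)

def dZ {n : ℕ} (j : Fin n) (f : Hgrp n → ℂ) : Hgrp n → ℂ := fun p =>
  (1/2 : ℂ) * (fderiv ℝ f p (Pi.single j 1, 0) - Complex.I * fderiv ℝ f p (Pi.single j Complex.I, 0))

def dZbar {n : ℕ} (j : Fin n) (f : Hgrp n → ℂ) : Hgrp n → ℂ := fun p =>
  (1/2 : ℂ) * (fderiv ℝ f p (Pi.single j 1, 0) + Complex.I * fderiv ℝ f p (Pi.single j Complex.I, 0))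

def dT {n : ℕ} (f : Hgrp n → ℂ) : Hgrp n → ℂ := fun p => fderiv ℝ f p (0, 1)

def Lop {n : ℕ} (j : Fin n) (f : Hgrp n → ℂ) : Hgrp n → ℂ := fun p =>
  dZ j f p + Complex.I * (starRingEnd ℂ) (p.1 j) * dT f p

def Lbar {n : ℕ} (j : Fin n) (f : Hgrp n → ℂ) : Hgrp n → ℂ := fun p =>
  dZbar j f p - Complex.I * (p.1 j) * dT f p

/-- `f` is CR in the sense of distributions. -/
def IsCRfun {n : ℕ} (f : Hgrp n → ℂ) : Prop :=
  ∀ j : Fin n, ∀ φ : Hgrp n → ℂ, ContDiff ℝ ∞ φ → HasCompactSupport φ →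
    ∫ p : Hgrp n, f p * Lbar j φ p = 0

def pFourier {n : ℕ} (f : Hgrp n → ℂ) (z : Fin n → ℂ) (ξ : ℝ) : ℂ :=
  (Real.sqrt (2 * Real.pi))⁻¹ • ∫ t : ℝ, f (z, t) * Complex.exp (-Complex.I * ξ * t)

/-! Writing `w = |z|² - i t`, the integrand is `φ(ξ) e^{-ξ w}`, and `-w e^{-ξ w}` is the
`ξ`-derivative of `e^{-ξ w}`. Integrating by parts `N` times (no boundary terms, since `φ` has
compact support) turns `w^N ∫ φ(ξ) e^{-ξ w} dξ` into `∫ φ^{(N)}(ξ) e^{-ξ w} dξ`. On the support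
of `φ^{(N)}` we have `ξ ≥ a`, so `|e^{-ξ w}| = e^{-ξ |z|²} ≤ e^{-a |z|²}`. -/

lemma nsq_nonneg {n : ℕ} (z : Fin n → ℂ) : 0 ≤ nsq z :=
  Finset.sum_nonneg fun j _ => Complex.normSq_nonneg (z j)

lemma hasDerivAt_cexp_neg_mul (w : ℂ) (ξ : ℝ) :
    HasDerivAt (fun ξ : ℝ => cexp (-ξ * w)) (-w * cexp (-ξ * w)) ξ := by
  have h : HasDerivAt (fun ξ : ℝ => -(ξ : ℂ) * w) (-w) ξ := by
    simpa using (ofRealCLM.hasDerivAt (x := ξ)).neg.mul_const w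
  simpa [mul_comm] using h.cexp

lemma integral_deriv_mul_cexp_neg_mul {ψ : ℝ → ℂ} (hψ : ContDiff ℝ 1 ψ)
    (hψc : HasCompactSupport ψ) (w : ℂ) :
    ∫ ξ : ℝ, deriv ψ ξ * cexp (-ξ * w) = w * ∫ ξ : ℝ, ψ ξ * cexp (-ξ * w) := by
  have hcont : Continuous fun ξ : ℝ => cexp (-ξ * w) := by fun_prop
  have hibp := integral_mul_deriv_eq_deriv_mul_of_integrable
    (u := ψ) (v := fun ξ : ℝ => cexp (-ξ * w)) (u' := deriv ψ)
    (fun ξ _ => (hψ.differentiable one_ne_zero ξ).hasDerivAt)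
    (fun ξ _ => hasDerivAt_cexp_neg_mul w ξ)
    ((hψ.continuous.mul (continuous_const.mul hcont)).integrable_of_hasCompactSupport
      hψc.mul_right)
    (((hψ.continuous_deriv le_rfl).mul hcont).integrable_of_hasCompactSupport
      hψc.deriv.mul_right)
    ((hψ.continuous.mul hcont).integrable_of_hasCompactSupport hψc.mul_right)
  rw [← integral_const_mul, ← neg_eq_iff_eq_neg.mpr hibp, ← integral_neg]
  congr 1 with ξ
  ring

lemma pow_mul_integral_mul_cexp_neg_mul {N : ℕ} {φ : ℝ → ℂ} (hφ : ContDiff ℝ N φ)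
    (hφc : HasCompactSupport φ) (w : ℂ) :
    w ^ N * ∫ ξ : ℝ, φ ξ * cexp (-ξ * w) = ∫ ξ : ℝ, iteratedDeriv N φ ξ * cexp (-ξ * w) := by
  induction N generalizing φ with
  | zero => simp
  | succ N ih =>
    have hφ' : ContDiff ℝ N (deriv φ) := (contDiff_succ_iff_deriv.mp hφ).2.2
    rw [pow_succ, mul_assoc, ← integral_deriv_mul_cexp_neg_mul (hφ.of_le (by simp)) hφc,
      ih hφ' hφc.deriv, iteratedDeriv_succ']

lemma norm_integral_mul_cexp_neg_mul_le {ψ : ℝ → ℂ} {a : ℝ} {w : ℂ} (hψ : Integrable ψ)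
    (hsupp : Function.support ψ ⊆ Set.Ici a) (hw : 0 ≤ w.re) :
    ‖∫ ξ : ℝ, ψ ξ * cexp (-ξ * w)‖ ≤ Real.exp (-a * w.re) * ∫ ξ : ℝ, ‖ψ ξ‖ := by
  have hpointwise : ∀ ξ, ‖ψ ξ * cexp (-ξ * w)‖ ≤ Real.exp (-a * w.re) * ‖ψ ξ‖ := by
    intro ξ
    by_cases hξ : ψ ξ = 0
    · simp [hξ]
    have haξ : a ≤ ξ := hsupp hξ
    rw [norm_mul, norm_exp, mul_comm]
    gcongr
    simp only [neg_mul, neg_re, re_ofReal_mul]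
    nlinarith
  calc ‖∫ ξ : ℝ, ψ ξ * cexp (-ξ * w)‖ ≤ ∫ ξ : ℝ, ‖ψ ξ * cexp (-ξ * w)‖ :=
        norm_integral_le_integral_norm _
    _ ≤ ∫ ξ : ℝ, Real.exp (-a * w.re) * ‖ψ ξ‖ :=
        integral_mono_of_nonneg (.of_forall fun _ => norm_nonneg _) (hψ.norm.const_mul _)
          (.of_forall hpointwise)
    _ = Real.exp (-a * w.re) * ∫ ξ : ℝ, ‖ψ ξ‖ := integral_const_mul _ _

lemma support_iteratedDeriv_subset {𝕜 F : Type*} [NontriviallyNormedField 𝕜]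
    [NormedAddCommGroup F] [NormedSpace 𝕜 F] (N : ℕ) (f : 𝕜 → F) :
    Function.support (iteratedDeriv N f) ⊆ tsupport f := by
  intro x hx
  refine support_iteratedFDeriv_subset (𝕜 := 𝕜) N fun h => hx ?_
  rw [iteratedDeriv_eq_iteratedFDeriv, h]; rfl

theorem integration_by_parts_decay_general (n : ℕ) (a : ℝ) (N : ℕ)
    (φ : ℝ → ℂ) (hφ : ContDiff ℝ ∞ φ) (hφc : HasCompactSupport φ)
    (hφsupp : Function.support φ ⊆ Set.Ici a) (z : Fin n → ℂ) (t : ℝ) :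
    ‖((nsq z : ℂ) - Complex.I * t) ^ N *
        ∫ ξ : ℝ, φ ξ * Complex.exp (-(ξ : ℂ) * (nsq z : ℂ)) * Complex.exp (Complex.I * ξ * t)‖
      ≤ Real.exp (-a * nsq z) * ∫ ξ : ℝ, ‖iteratedDeriv N φ ξ‖ := by
  set w : ℂ := nsq z - I * t
  have hw : w.re = nsq z := by simp [w]
  have hintegrand : ∀ ξ : ℝ, φ ξ * cexp (-ξ * nsq z) * cexp (I * ξ * t) = φ ξ * cexp (-ξ * w) :=
    fun ξ => by rw [mul_assoc, ← Complex.exp_add]; congr 2; simp only [w]; ring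
  simp_rw [hintegrand]
  rw [pow_mul_integral_mul_cexp_neg_mul (hφ.of_le (by exact_mod_cast le_top)) hφc, ← hw]
  have hsupp := support_iteratedDeriv_subset N φ
  refine norm_integral_mul_cexp_neg_mul_le ?_ (hsupp.trans (closure_minimal hφsupp isClosed_Ici))
    (hw ▸ nsq_nonneg z)
  exact (hφ.continuous_iteratedDeriv N (by exact_mod_cast le_top)).integrable_of_hasCompactSupport
    (hφc.mono' hsupp)

/-- for φ ∈ C_c^∞(ℝ) supported in [a,∞), a > 0,
|(|z|² − it)^N ∫ φ(ξ) e^{−ξ|z|²} e^{iξt} dξ| ≤ e^{−a|z|²} ∫ |φ^{(N)}|. -/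
theorem integration_by_parts_decay (n : ℕ) (a : ℝ) (ha : 0 < a) (N : ℕ)
    (φ : ℝ → ℂ) (hφ : ContDiff ℝ ∞ φ) (hφc : HasCompactSupport φ)
    (hφsupp : Function.support φ ⊆ Set.Ici a) (z : Fin n → ℂ) (t : ℝ) :
    ‖((nsq z : ℂ) - Complex.I * t) ^ N *
        ∫ ξ : ℝ, φ ξ * Complex.exp (-(ξ : ℂ) * (nsq z : ℂ)) * Complex.exp (Complex.I * ξ * t)‖
      ≤ Real.exp (-a * nsq z) * ∫ ξ : ℝ, ‖iteratedDeriv N φ ξ‖ :=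
  integration_by_parts_decay_general n a N φ hφ hφc hφsupp z t
end
end

section
/- Let T > 0 and let f be a Schwartz function on ℂⁿ × ℝ whose partial Fourier transform satisfies Ff(z,ξ) = 0 whenever ξ > T. Then for every j = 1,…,n, ∫_{ℂⁿ×ℝ} |L_j f|² dσ ≤ ∫_{ℂⁿ×ℝ} |L̄_j f|² dσ + 2T ∫_{ℂⁿ×ℝ} |f|² dσ. -/
open MeasureTheory Complex Filter
open scoped ContDiff ENNReal

noncomputable section

namespace LowFreqAux

variable {E : Type*} [NormedAddCommGroup E] [NormedSpace ℝ E]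

/-- Postcomposition of a Schwartz function with complex conjugation. -/
def conjS (f : SchwartzMap E ℂ) : SchwartzMap E ℂ where
  toFun := fun x => (starRingEnd ℂ) (f x)
  smooth' := by
    have := Complex.conjCLE.toContinuousLinearMap.contDiff.comp (f.smooth ⊤)
    simpa [Function.comp_def] using this
  decay' := by
    intro k m
    obtain ⟨C, hC⟩ := f.decay k m
    refine ⟨C, fun x => ?_⟩
    have h : ‖iteratedFDeriv ℝ m (fun x => (starRingEnd ℂ) (f x)) x‖
        = ‖iteratedFDeriv ℝ m (⇑f) x‖ := by
      have := Complex.conjLIE.norm_iteratedFDeriv_comp_left (⇑f) x m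
      simpa [Function.comp_def] using this
    rw [h]; exact hC.2 x

@[simp] lemma conjS_apply (f : SchwartzMap E ℂ) (x : E) :
    conjS f x = (starRingEnd ℂ) (f x) := rfl

lemma fderiv_conj {x : E} (f : E → ℂ) (hf : DifferentiableAt ℝ f x) (v : E) :
    fderiv ℝ (fun y => (starRingEnd ℂ) (f y)) x v = (starRingEnd ℂ) (fderiv ℝ f x v) := by
  have h : HasFDerivAt (fun y => (starRingEnd ℂ) (f y))
      (Complex.conjCLE.toContinuousLinearMap.comp (fderiv ℝ f x)) x := by
    have := Complex.conjCLE.toContinuousLinearMap.hasFDerivAt.comp x hf.hasFDerivAt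
    simpa [Function.comp_def] using this
  simp [h.fderiv]

variable {n : ℕ}

instance : (volume : Measure (Hgrp n)).IsAddHaarMeasure :=
  Measure.prod.instIsAddHaarMeasure _ _

def coordCLM (j : Fin n) : Hgrp n →L[ℝ] ℂ :=
  (ContinuousLinearMap.proj j).comp (ContinuousLinearMap.fst ℝ (Fin n → ℂ) ℝ)

@[simp] lemma coordCLM_apply (j : Fin n) (p : Hgrp n) : coordCLM j p = p.1 j := rfl

def coordBarCLM (j : Fin n) : Hgrp n →L[ℝ] ℂ :=
  Complex.conjCLE.toContinuousLinearMap.comp (coordCLM j)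

@[simp] lemma coordBarCLM_apply (j : Fin n) (p : Hgrp n) :
    coordBarCLM j p = (starRingEnd ℂ) (p.1 j) := rfl

def Dv (v : Hgrp n) : SchwartzMap (Hgrp n) ℂ →L[ℝ] SchwartzMap (Hgrp n) ℂ :=
  LineDeriv.lineDerivOpCLM ℝ (SchwartzMap (Hgrp n) ℂ) v

@[simp] lemma Dv_apply (v : Hgrp n) (u : SchwartzMap (Hgrp n) ℂ) (p : Hgrp n) :
    Dv v u p = fderiv ℝ (⇑u) p v := rfl

def Mz (j : Fin n) : SchwartzMap (Hgrp n) ℂ →L[ℝ] SchwartzMap (Hgrp n) ℂ :=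
  SchwartzMap.bilinLeftCLM (ContinuousLinearMap.mul ℝ ℂ) (coordCLM j).hasTemperateGrowth

@[simp] lemma Mz_apply (j : Fin n) (u : SchwartzMap (Hgrp n) ℂ) (p : Hgrp n) :
    Mz j u p = u p * p.1 j := rfl

def Mzb (j : Fin n) : SchwartzMap (Hgrp n) ℂ →L[ℝ] SchwartzMap (Hgrp n) ℂ :=
  SchwartzMap.bilinLeftCLM (ContinuousLinearMap.mul ℝ ℂ) (coordBarCLM j).hasTemperateGrowth

@[simp] lemma Mzb_apply (j : Fin n) (u : SchwartzMap (Hgrp n) ℂ) (p : Hgrp n) :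
    Mzb j u p = u p * (starRingEnd ℂ) (p.1 j) := rfl

lemma integrable_mulS {D : Type*} [NormedAddCommGroup D] [NormedSpace ℝ D]
    [MeasurableSpace D] [BorelSpace D] [SecondCountableTopology D]
    (μ : Measure D) [μ.HasTemperateGrowth] (u w : SchwartzMap D ℂ) :
    Integrable (fun p => u p * w p) μ := by
  refine (w.integrable (μ := μ)).bdd_mul (c := SchwartzMap.seminorm ℝ 0 0 u) u.continuous.aestronglyMeasurable ?_
  exact Filter.Eventually.of_forall (fun x => u.norm_le_seminorm ℝ x)

lemma integrable_mul_conj {D : Type*} [NormedAddCommGroup D] [NormedSpace ℝ D]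
    [MeasurableSpace D] [BorelSpace D] [SecondCountableTopology D]
    (μ : Measure D) [μ.HasTemperateGrowth] (u w : SchwartzMap D ℂ) :
    Integrable (fun p => u p * (starRingEnd ℂ) (w p)) μ := by
  have := integrable_mulS μ u (conjS w)
  simpa using this

lemma integrable_normSq {D : Type*} [NormedAddCommGroup D] [NormedSpace ℝ D]
    [MeasurableSpace D] [BorelSpace D] [SecondCountableTopology D]
    (μ : Measure D) [μ.HasTemperateGrowth] (u : SchwartzMap D ℂ) :
    Integrable (fun p => ‖u p‖ ^ 2) μ := by
  have := (integrable_mul_conj μ u u).norm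
  refine this.congr ?_
  filter_upwards with p
  simp [Complex.norm_conj, sq]

def P (u w : SchwartzMap (Hgrp n) ℂ) : ℂ := ∫ p : Hgrp n, u p * w p

lemma P_congr {u w u' w' : SchwartzMap (Hgrp n) ℂ}
    (h : ∀ p, u p * w p = u' p * w' p) : P u w = P u' w' :=
  integral_congr_ae (Filter.Eventually.of_forall h)

lemma P_comm (u w : SchwartzMap (Hgrp n) ℂ) : P u w = P w u :=
  P_congr (fun p => mul_comm _ _)

lemma P_add_left (u v w : SchwartzMap (Hgrp n) ℂ) : P (u + v) w = P u w + P v w := by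
  simp only [P, SchwartzMap.add_apply, add_mul]
  exact integral_add (integrable_mulS volume u w) (integrable_mulS volume v w)

lemma P_add_right (u v w : SchwartzMap (Hgrp n) ℂ) : P u (v + w) = P u v + P u w := by
  rw [P_comm, P_add_left, P_comm v u, P_comm w u]

lemma P_smul_left (c : ℂ) (u w : SchwartzMap (Hgrp n) ℂ) : P (c • u) w = c * P u w := by
  simp only [P, SchwartzMap.smul_apply, smul_eq_mul, mul_assoc]
  rw [← smul_eq_mul, ← integral_smul]
  simp [smul_eq_mul]

lemma P_smul_right (c : ℂ) (u w : SchwartzMap (Hgrp n) ℂ) : P u (c • w) = c * P u w := by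
  rw [P_comm, P_smul_left, P_comm w u]

lemma P_sub_left (u v w : SchwartzMap (Hgrp n) ℂ) : P (u - v) w = P u w - P v w := by
  have h : u - v = u + (-1 : ℂ) • v := by ext p; simp [sub_eq_add_neg]
  rw [h, P_add_left, P_smul_left]; ring

lemma P_sub_right (u v w : SchwartzMap (Hgrp n) ℂ) : P u (v - w) = P u v - P u w := by
  rw [P_comm, P_sub_left, P_comm v u, P_comm w u]

/-- Integration by parts. -/
lemma P_Dv_right (u w : SchwartzMap (Hgrp n) ℂ) (v : Hgrp n) :
    P u (Dv v w) = - P (Dv v u) w := by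
  have h1 : Integrable (fun x : Hgrp n => (fderiv ℝ (⇑u) x) v * w x) volume := by
    simpa using integrable_mulS volume (Dv v u) w
  have h2 : Integrable (fun x : Hgrp n => u x * (fderiv ℝ (⇑w) x) v) volume := by
    simpa using integrable_mulS volume u (Dv v w)
  exact integral_mul_fderiv_eq_neg_fderiv_mul_of_integrable h1 h2 (integrable_mulS volume u w)
    (fun x _ => u.differentiableAt) (fun x _ => w.differentiableAt)

lemma Dv_Mz (j : Fin n) (v : Hgrp n) (u : SchwartzMap (Hgrp n) ℂ) :
    Dv v (Mz j u) = (v.1 j) • u + Mz j (Dv v u) := by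
  ext p
  show fderiv ℝ (fun q : Hgrp n => u q * coordCLM j q) p v = _
  have hu : DifferentiableAt ℝ (⇑u) p := u.differentiableAt
  have hc : DifferentiableAt ℝ (fun q : Hgrp n => coordCLM j q) p :=
    (coordCLM j).differentiableAt
  have hm := fderiv_fun_mul (𝕜 := ℝ) hu hc
  have h2 : fderiv ℝ (fun q : Hgrp n => coordCLM j q) p = coordCLM j :=
    (coordCLM j).fderiv
  rw [hm, h2]
  simp [SchwartzMap.add_apply, SchwartzMap.smul_apply]
  ring

lemma Dv_Mzb (j : Fin n) (v : Hgrp n) (u : SchwartzMap (Hgrp n) ℂ) :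
    Dv v (Mzb j u) = ((starRingEnd ℂ) (v.1 j)) • u + Mzb j (Dv v u) := by
  ext p
  show fderiv ℝ (fun q : Hgrp n => u q * coordBarCLM j q) p v = _
  have hu : DifferentiableAt ℝ (⇑u) p := u.differentiableAt
  have hc : DifferentiableAt ℝ (fun q : Hgrp n => coordBarCLM j q) p :=
    (coordBarCLM j).differentiableAt
  have hm := fderiv_fun_mul (𝕜 := ℝ) hu hc
  have h2 : fderiv ℝ (fun q : Hgrp n => coordBarCLM j q) p = coordBarCLM j :=
    (coordBarCLM j).fderiv
  rw [hm, h2]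
  simp [SchwartzMap.add_apply, SchwartzMap.smul_apply]
  ring

lemma Dv_comm (v w : Hgrp n) (u : SchwartzMap (Hgrp n) ℂ) :
    Dv v (Dv w u) = Dv w (Dv v u) := by
  ext p
  show fderiv ℝ (fun q : Hgrp n => fderiv ℝ (⇑u) q w) p v
      = fderiv ℝ (fun q : Hgrp n => fderiv ℝ (⇑u) q v) p w
  have hd1 : Differentiable ℝ (fderiv ℝ (⇑u)) := by
    have he : (fderiv ℝ (⇑u)) = ⇑(SchwartzMap.fderivCLM ℝ (Hgrp n) ℂ u) :=
      funext fun x => (SchwartzMap.fderivCLM_apply ℝ u x).symm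
    rw [he]
    exact (SchwartzMap.fderivCLM ℝ (Hgrp n) ℂ u).differentiable
  have key : ∀ (a b : Hgrp n),
      fderiv ℝ (fun q : Hgrp n => fderiv ℝ (⇑u) q b) p a
        = fderiv ℝ (fderiv ℝ (⇑u)) p a b := by
    intro a b
    have hdd : DifferentiableAt ℝ (fderiv ℝ (⇑u)) p := hd1 p
    have hconst : DifferentiableAt ℝ (fun _ : Hgrp n => b) p := differentiableAt_const _
    have h3 := fderiv_clm_apply (c := fderiv ℝ (⇑u)) (u := fun _ => b) hdd hconst
    rw [h3]
    simp
  rw [key v w, key w v]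
  exact second_derivative_symmetric (f := ⇑u) (f' := fderiv ℝ (⇑u))
    (f'' := fderiv ℝ (fderiv ℝ (⇑u)) p) (x := p)
    (fun y => (u.differentiable y).hasFDerivAt) ((hd1 p).hasFDerivAt) v w

def E1 (j : Fin n) : Hgrp n := (Pi.single j 1, 0)
def E2 (j : Fin n) : Hgrp n := (Pi.single j Complex.I, 0)
def E3 : Hgrp n := (0, 1)

@[simp] lemma E1_fst (j : Fin n) : (E1 j).1 j = 1 := by simp [E1]
@[simp] lemma E2_fst (j : Fin n) : (E2 j).1 j = Complex.I := by simp [E2]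
@[simp] lemma E3_fst (j : Fin n) : (E3 : Hgrp n).1 j = 0 := rfl

def LSm (j : Fin n) (u : SchwartzMap (Hgrp n) ℂ) : SchwartzMap (Hgrp n) ℂ :=
  (2:ℂ)⁻¹ • Dv (E1 j) u - ((2:ℂ)⁻¹ * Complex.I) • Dv (E2 j) u + Complex.I • Mzb j (Dv E3 u)

def LbarSm (j : Fin n) (u : SchwartzMap (Hgrp n) ℂ) : SchwartzMap (Hgrp n) ℂ :=
  (2:ℂ)⁻¹ • Dv (E1 j) u + ((2:ℂ)⁻¹ * Complex.I) • Dv (E2 j) u - Complex.I • Mz j (Dv E3 u)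

lemma LSm_eq (j : Fin n) (u : SchwartzMap (Hgrp n) ℂ) (p : Hgrp n) :
    LSm j u p = Lop j (⇑u) p := by
  simp only [LSm, Lop, dZ, dT, SchwartzMap.add_apply, SchwartzMap.sub_apply,
    SchwartzMap.smul_apply, Dv_apply, Mzb_apply, E1, E2, E3, smul_eq_mul]
  ring

lemma LbarSm_eq (j : Fin n) (u : SchwartzMap (Hgrp n) ℂ) (p : Hgrp n) :
    LbarSm j u p = Lbar j (⇑u) p := by
  simp only [LbarSm, Lbar, dZbar, dT, SchwartzMap.add_apply, SchwartzMap.sub_apply,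
    SchwartzMap.smul_apply, Dv_apply, Mz_apply, E1, E2, E3, smul_eq_mul]
  ring

lemma Dv_conjS (v : Hgrp n) (u : SchwartzMap (Hgrp n) ℂ) (p : Hgrp n) :
    Dv v (conjS u) p = (starRingEnd ℂ) (Dv v u p) := by
  simp only [Dv_apply]
  exact fderiv_conj (⇑u) u.differentiableAt v

lemma conj_LSm (j : Fin n) (u : SchwartzMap (Hgrp n) ℂ) (p : Hgrp n) :
    (starRingEnd ℂ) (LSm j u p) = LbarSm j (conjS u) p := by
  simp only [LSm, LbarSm, SchwartzMap.add_apply, SchwartzMap.sub_apply,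
    SchwartzMap.smul_apply, Mzb_apply, Mz_apply, smul_eq_mul, map_add, map_sub, map_mul,
    map_inv₀, Complex.conj_I, Complex.conj_conj, Dv_conjS, conjS_apply, map_ofNat]
  ring

lemma conj_LbarSm (j : Fin n) (u : SchwartzMap (Hgrp n) ℂ) (p : Hgrp n) :
    (starRingEnd ℂ) (LbarSm j u p) = LSm j (conjS u) p := by
  simp only [LSm, LbarSm, SchwartzMap.add_apply, SchwartzMap.sub_apply,
    SchwartzMap.smul_apply, Mzb_apply, Mz_apply, smul_eq_mul, map_add, map_sub, map_mul,
    map_inv₀, Complex.conj_I, Complex.conj_conj, Dv_conjS, conjS_apply, map_ofNat]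
  ring

theorem key_identity (j : Fin n) (u w : SchwartzMap (Hgrp n) ℂ) :
    P (LSm j u) (LbarSm j w) - P (LbarSm j u) (LSm j w)
      = (-2 * Complex.I) * P (Dv E3 u) w := by
  have move_z : ∀ x y : SchwartzMap (Hgrp n) ℂ, P x (Mz j y) = P (Mz j x) y :=
    fun x y => P_congr (fun p => by simp only [Mz_apply]; ring)
  have move_zb : ∀ x y : SchwartzMap (Hgrp n) ℂ, P x (Mzb j y) = P (Mzb j x) y :=
    fun x y => P_congr (fun p => by simp only [Mzb_apply]; ring)
  -- the zero-order commutator values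
  have comm_z : ∀ (v : Hgrp n) (x : SchwartzMap (Hgrp n) ℂ),
      Dv v (Mz j x) = (v.1 j) • x + Mz j (Dv v x) := Dv_Mz j
  -- T1
  have hT1 : P (Dv (E1 j) u) (Mz j (Dv E3 w))
      = - P (Mz j (Dv (E1 j) (Dv E3 u))) w := by
    rw [move_z, P_Dv_right, Dv_Mz]
    simp [Dv_comm E3 (E1 j) u]
  have hT2 : P (Dv (E2 j) u) (Mz j (Dv E3 w))
      = - P (Mz j (Dv (E2 j) (Dv E3 u))) w := by
    rw [move_z, P_Dv_right, Dv_Mz]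
    simp [Dv_comm E3 (E2 j) u]
  have hT5 : P (Dv (E1 j) u) (Mzb j (Dv E3 w))
      = - P (Mzb j (Dv (E1 j) (Dv E3 u))) w := by
    rw [move_zb, P_Dv_right, Dv_Mzb]
    simp [Dv_comm E3 (E1 j) u]
  have hT6 : P (Dv (E2 j) u) (Mzb j (Dv E3 w))
      = - P (Mzb j (Dv (E2 j) (Dv E3 u))) w := by
    rw [move_zb, P_Dv_right, Dv_Mzb]
    simp [Dv_comm E3 (E2 j) u]
  have hT3 : P (Mzb j (Dv E3 u)) (Dv (E1 j) w)
      = - P (Dv E3 u) w - P (Mzb j (Dv (E1 j) (Dv E3 u))) w := by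
    rw [P_Dv_right, Dv_Mzb]
    rw [P_add_left, P_smul_left]
    simp only [E1_fst, map_one, one_mul]
    ring
  have hT4 : P (Mzb j (Dv E3 u)) (Dv (E2 j) w)
      = Complex.I * P (Dv E3 u) w - P (Mzb j (Dv (E2 j) (Dv E3 u))) w := by
    rw [P_Dv_right, Dv_Mzb]
    rw [P_add_left, P_smul_left]
    simp
    ring
  have hT7 : P (Mz j (Dv E3 u)) (Dv (E1 j) w)
      = - P (Dv E3 u) w - P (Mz j (Dv (E1 j) (Dv E3 u))) w := by
    rw [P_Dv_right, Dv_Mz]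
    rw [P_add_left, P_smul_left]
    simp only [E1_fst, map_one, one_mul]
    ring
  have hT8 : P (Mz j (Dv E3 u)) (Dv (E2 j) w)
      = - Complex.I * P (Dv E3 u) w - P (Mz j (Dv (E2 j) (Dv E3 u))) w := by
    rw [P_Dv_right, Dv_Mz]
    rw [P_add_left, P_smul_left]
    simp
    ring
  have hT9 : P (Mzb j (Dv E3 u)) (Mz j (Dv E3 w))
      = P (Mz j (Dv E3 u)) (Mzb j (Dv E3 w)) :=
    P_congr (fun p => by simp only [Mz_apply, Mzb_apply]; ring)
  have hA1 : P (Dv (E1 j) u) (Dv (E2 j) w)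
      = - P (Dv (E2 j) (Dv (E1 j) u)) w := P_Dv_right _ _ _
  have hA2 : P (Dv (E2 j) u) (Dv (E1 j) w)
      = - P (Dv (E2 j) (Dv (E1 j) u)) w := by
    rw [P_Dv_right, Dv_comm]
  simp only [LSm, LbarSm, P_add_left, P_add_right, P_sub_left, P_sub_right,
    P_smul_left, P_smul_right]
  rw [hT1, hT2, hT3, hT4, hT5, hT6, hT7, hT8, hT9, hA1, hA2]
  linear_combination (Complex.I * P (Dv E3 u) w) * Complex.I_sq


section Fourier1D
open FourierTransform Real SchwartzMap
open scoped Real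

/-- Parseval for Schwartz functions on ℝ. -/
lemma parseval (u v : SchwartzMap ℝ ℂ) :
    ∫ t : ℝ, u t * (starRingEnd ℂ) (v t)
      = ∫ ξ : ℝ, 𝓕 (⇑u) ξ * (starRingEnd ℂ) (𝓕 (⇑v) ξ) := by
  have hFv : ⇑(fourierTransformCLM ℝ v) = 𝓕 ⇑v := by
    ext x; exact SchwartzMap.fourierTransformCLM_apply ℝ v ▸ rfl
  have hgint : Integrable (fun ξ : ℝ => (starRingEnd ℂ) (𝓕 (⇑v) ξ)) volume := by
    refine ((conjS (fourierTransformCLM ℝ v)).integrable (μ := volume)).congr ?_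
    filter_upwards with ξ
    rw [conjS_apply, congrFun hFv ξ]
  have hL : Continuous fun p : ℝ × ℝ => (innerₗ ℝ) p.1 p.2 := by
    simp only [innerₗ_apply_apply]
    exact continuous_inner
  have key := VectorFourier.integral_fourierIntegral_smul_eq_flip
    (e := Real.fourierChar) (L := innerₗ ℝ) (μ := volume) (ν := volume)
    (f := ⇑u) (g := fun ξ : ℝ => (starRingEnd ℂ) (𝓕 (⇑v) ξ))
    Real.continuous_fourierChar hL u.integrable hgint
  -- identify the right-hand side fourier integral with conj ∘ v
  have hinv : ∀ x : ℝ,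
      VectorFourier.fourierIntegral Real.fourierChar volume (innerₗ ℝ).flip
        (fun ξ : ℝ => (starRingEnd ℂ) (𝓕 (⇑v) ξ)) x = (starRingEnd ℂ) (v x) := by
    intro x
    rw [flip_innerₗ]
    have h1 : VectorFourier.fourierIntegral Real.fourierChar volume (innerₗ ℝ)
        (fun ξ : ℝ => (starRingEnd ℂ) (𝓕 (⇑v) ξ)) x
        = ∫ ξ : ℝ, Complex.exp ((↑(-2 * π * (ξ * x)) * Complex.I))
            • (starRingEnd ℂ) (𝓕 (⇑v) ξ) := by
      rw [show VectorFourier.fourierIntegral Real.fourierChar volume (innerₗ ℝ)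
          (fun ξ : ℝ => (starRingEnd ℂ) (𝓕 (⇑v) ξ)) x
          = 𝓕 (fun ξ : ℝ => (starRingEnd ℂ) (𝓕 (⇑v) ξ)) x from rfl, Real.fourier_eq']
      simp only [RCLike.inner_apply, conj_trivial, mul_comm x]
    rw [h1]
    have h2 : ∀ ξ : ℝ, Complex.exp ((↑(-2 * π * (ξ * x)) * Complex.I))
        • (starRingEnd ℂ) (𝓕 (⇑v) ξ)
        = (starRingEnd ℂ) (Complex.exp ((↑(2 * π * (ξ * x)) * Complex.I)) • (𝓕 (⇑v) ξ)) := by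
      intro ξ
      simp only [smul_eq_mul, map_mul, ← Complex.exp_conj, map_neg, Complex.conj_ofReal,
        map_ofNat, Complex.conj_I, mul_neg, neg_mul]
      push_cast
      ring_nf
    simp only [h2]
    rw [integral_conj]
    congr 1
    have h3 : ∫ ξ : ℝ, Complex.exp ((↑(2 * π * (ξ * x)) * Complex.I)) • (𝓕 (⇑v) ξ)
        = 𝓕⁻ (𝓕 ⇑v) x := by
      rw [Real.fourierInv_eq']
      simp only [RCLike.inner_apply, conj_trivial, mul_comm x]
    rw [h3]
    have hFvint : Integrable (𝓕 ⇑v) volume := by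
      rw [← hFv]; exact (fourierTransformCLM ℝ v).integrable
    rw [Continuous.fourierInv_fourier_eq v.continuous v.integrable hFvint]
  calc ∫ t : ℝ, u t * (starRingEnd ℂ) (v t)
      = ∫ t : ℝ, u t • (VectorFourier.fourierIntegral Real.fourierChar volume (innerₗ ℝ).flip
          (fun ξ : ℝ => (starRingEnd ℂ) (𝓕 (⇑v) ξ)) t) := by
        congr 1; funext t; rw [hinv t]; simp
    _ = ∫ ξ : ℝ, (𝓕 (⇑u) ξ) • (starRingEnd ℂ) (𝓕 (⇑v) ξ) := key.symm
    _ = ∫ ξ : ℝ, 𝓕 (⇑u) ξ * (starRingEnd ℂ) (𝓕 (⇑v) ξ) := by simp [smul_eq_mul]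

open scoped Real

lemma plancherel (h : SchwartzMap ℝ ℂ) :
    ∫ t : ℝ, ‖h t‖ ^ 2 = ∫ ξ : ℝ, ‖𝓕 (⇑h) ξ‖ ^ 2 := by
  have hp := parseval h h
  have hG : ⇑(fourierTransformCLM ℝ h) = 𝓕 ⇑h := by
    ext x; exact SchwartzMap.fourierTransformCLM_apply ℝ h ▸ rfl
  have h1 : ∫ t : ℝ, ‖h t‖ ^ 2 = (∫ t : ℝ, h t * (starRingEnd ℂ) (h t)).re :=
    calc ∫ t : ℝ, ‖h t‖ ^ 2
        = ∫ t : ℝ, Complex.reCLM (h t * (starRingEnd ℂ) (h t)) := by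
          congr 1; funext t
          simp [Complex.mul_conj, Complex.normSq_eq_norm_sq, ← Complex.ofReal_pow]
      _ = Complex.reCLM (∫ t : ℝ, h t * (starRingEnd ℂ) (h t)) :=
          Complex.reCLM.integral_comp_comm (integrable_mul_conj volume h h)
      _ = (∫ t : ℝ, h t * (starRingEnd ℂ) (h t)).re := rfl
  have h2 : ∫ ξ : ℝ, ‖𝓕 (⇑h) ξ‖ ^ 2 = (∫ ξ : ℝ, 𝓕 (⇑h) ξ * (starRingEnd ℂ) (𝓕 (⇑h) ξ)).re := by
    have hint : Integrable (fun ξ : ℝ => 𝓕 (⇑h) ξ * (starRingEnd ℂ) (𝓕 (⇑h) ξ)) volume := by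
      have := integrable_mul_conj volume (fourierTransformCLM ℝ h) (fourierTransformCLM ℝ h)
      simpa [hG, SchwartzMap.fourier_coe] using this
    calc ∫ ξ : ℝ, ‖𝓕 (⇑h) ξ‖ ^ 2
        = ∫ ξ : ℝ, Complex.reCLM (𝓕 (⇑h) ξ * (starRingEnd ℂ) (𝓕 (⇑h) ξ)) := by
          congr 1; funext ξ
          simp [Complex.mul_conj, Complex.normSq_eq_norm_sq, ← Complex.ofReal_pow]
      _ = Complex.reCLM (∫ ξ : ℝ, 𝓕 (⇑h) ξ * (starRingEnd ℂ) (𝓕 (⇑h) ξ)) :=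
          Complex.reCLM.integral_comp_comm hint
      _ = (∫ ξ : ℝ, 𝓕 (⇑h) ξ * (starRingEnd ℂ) (𝓕 (⇑h) ξ)).re := rfl
  rw [h1, h2, hp]

lemma oneD (h : SchwartzMap ℝ ℂ) (T : ℝ)
    (hvan : ∀ om : ℝ, T < 2 * π * om → 𝓕 (⇑h) om = 0) :
    2 * (∫ t : ℝ, deriv (⇑h) t * (starRingEnd ℂ) (h t)).im
      ≤ 2 * T * ∫ t : ℝ, ‖h t‖ ^ 2 := by
  have hG : ⇑(fourierTransformCLM ℝ h) = 𝓕 ⇑h := by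
    ext x; exact SchwartzMap.fourierTransformCLM_apply ℝ h ▸ rfl
  have hderivS : ⇑(SchwartzMap.derivCLM ℝ ℂ h) = deriv (⇑h) := by
    ext t; exact SchwartzMap.derivCLM_apply ℝ h t ▸ rfl
  have hU : ⇑(fourierTransformCLM ℝ (SchwartzMap.derivCLM ℝ ℂ h)) = 𝓕 (deriv (⇑h)) := by
    ext x
    rw [SchwartzMap.fourierTransformCLM_apply]
    rw [SchwartzMap.fourier_coe, hderivS]
  have hUG : 𝓕 (deriv (⇑h)) = fun om : ℝ => (2 * ↑π * Complex.I * ↑om) • 𝓕 (⇑h) om := by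
    refine Real.fourier_deriv h.integrable h.differentiable ?_
    rw [← hderivS]; exact (SchwartzMap.derivCLM ℝ ℂ h).integrable
  have hpar : ∫ t : ℝ, deriv (⇑h) t * (starRingEnd ℂ) (h t)
      = ∫ ξ : ℝ, 𝓕 (deriv (⇑h)) ξ * (starRingEnd ℂ) (𝓕 (⇑h) ξ) := by
    have hp := parseval (SchwartzMap.derivCLM ℝ ℂ h) h
    rw [hderivS] at hp
    exact hp
  have hint0 : Integrable (fun ξ : ℝ => 𝓕 (deriv (⇑h)) ξ * (starRingEnd ℂ) (𝓕 (⇑h) ξ)) volume := by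
    have := integrable_mul_conj volume (fourierTransformCLM ℝ (SchwartzMap.derivCLM ℝ ℂ h))
      (fourierTransformCLM ℝ h)
    refine this.congr ?_
    filter_upwards with ξ
    rw [congrFun hU ξ, congrFun hG ξ]
  have him : (∫ t : ℝ, deriv (⇑h) t * (starRingEnd ℂ) (h t)).im
      = ∫ ξ : ℝ, (𝓕 (deriv (⇑h)) ξ * (starRingEnd ℂ) (𝓕 (⇑h) ξ)).im := by
    rw [hpar]
    exact (Complex.imCLM.integral_comp_comm hint0).symm
  have hptwise : ∀ ξ : ℝ, (𝓕 (deriv (⇑h)) ξ * (starRingEnd ℂ) (𝓕 (⇑h) ξ)).im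
      = 2 * π * ξ * ‖𝓕 (⇑h) ξ‖ ^ 2 := by
    intro ξ
    rw [congrFun hUG ξ, smul_eq_mul, mul_assoc, Complex.mul_conj]
    simp [Complex.mul_im, Complex.mul_re, Complex.normSq_eq_norm_sq, ← Complex.ofReal_pow]
  have hbound : ∀ ξ : ℝ, 2 * π * ξ * ‖𝓕 (⇑h) ξ‖ ^ 2 ≤ T * ‖𝓕 (⇑h) ξ‖ ^ 2 := by
    intro ξ
    rcases le_or_gt (2 * π * ξ) T with hc | hc
    · exact mul_le_mul_of_nonneg_right hc (by positivity)
    · rw [hvan ξ hc]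
      simp
  have hint1 : Integrable (fun ξ : ℝ => 2 * π * ξ * ‖𝓕 (⇑h) ξ‖ ^ 2) volume := by
    have := Complex.imCLM.integrable_comp hint0
    refine this.congr ?_
    filter_upwards with ξ
    exact hptwise ξ
  have hint2 : Integrable (fun ξ : ℝ => T * ‖𝓕 (⇑h) ξ‖ ^ 2) volume := by
    have := (integrable_normSq volume (fourierTransformCLM ℝ h)).const_mul T
    refine this.congr ?_
    filter_upwards with ξ
    rw [congrFun hG ξ]
  have hmono : ∫ ξ : ℝ, 2 * π * ξ * ‖𝓕 (⇑h) ξ‖ ^ 2 ≤ ∫ ξ : ℝ, T * ‖𝓕 (⇑h) ξ‖ ^ 2 :=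
    integral_mono hint1 hint2 hbound
  calc 2 * (∫ t : ℝ, deriv (⇑h) t * (starRingEnd ℂ) (h t)).im
      = 2 * ∫ ξ : ℝ, 2 * π * ξ * ‖𝓕 (⇑h) ξ‖ ^ 2 := by
        rw [him]
        congr 1
        exact integral_congr_ae (Filter.Eventually.of_forall hptwise)
    _ ≤ 2 * ∫ ξ : ℝ, T * ‖𝓕 (⇑h) ξ‖ ^ 2 := by linarith
    _ = 2 * T * ∫ ξ : ℝ, ‖𝓕 (⇑h) ξ‖ ^ 2 := by
        have hs : ∫ ξ : ℝ, T * ‖𝓕 (⇑h) ξ‖ ^ 2 = T * ∫ ξ : ℝ, ‖𝓕 (⇑h) ξ‖ ^ 2 := by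
          simpa [smul_eq_mul] using integral_smul T (fun ξ : ℝ => ‖𝓕 (⇑h) ξ‖ ^ 2)
        rw [hs]; ring
    _ = 2 * T * ∫ t : ℝ, ‖h t‖ ^ 2 := by rw [plancherel h]


end Fourier1D

-- ## Slicing in the t-variable

variable (n) in
lemma sliceA_temperate (z : Fin n → ℂ) :
    Function.HasTemperateGrowth (fun t : ℝ => ((z, t) : Hgrp n)) := by
  have hder : ∀ t : ℝ, HasFDerivAt (𝕜 := ℝ) (fun t : ℝ => ((z, t) : Hgrp n))
      ((0 : ℝ →L[ℝ] (Fin n → ℂ)).prod (ContinuousLinearMap.id ℝ ℝ)) t :=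
    fun t => (hasFDerivAt_const z t).prodMk (hasFDerivAt_id t)
  have hdiff : Differentiable ℝ (fun t : ℝ => ((z, t) : Hgrp n)) :=
    fun t => (hder t).differentiableAt
  have hfder : fderiv ℝ (fun t : ℝ => ((z, t) : Hgrp n))
      = fun _ : ℝ => ((0 : ℝ →L[ℝ] (Fin n → ℂ)).prod (ContinuousLinearMap.id ℝ ℝ)) :=
    funext fun t => (hder t).fderiv
  refine Function.HasTemperateGrowth.of_fderiv ?_ hdiff (k := 1) (C := ‖z‖ + 1) ?_
  · rw [hfder]
    exact Function.HasTemperateGrowth.const _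
  · intro t
    have h1 : ‖((z, t) : Hgrp n)‖ ≤ ‖z‖ + ‖t‖ := by
      rw [Prod.norm_def]
      exact max_le (by linarith [norm_nonneg t]) (by linarith [norm_nonneg z])
    have h2 : (0:ℝ) ≤ ‖t‖ := norm_nonneg _
    have h3 : (0:ℝ) ≤ ‖z‖ := norm_nonneg _
    calc ‖((z, t) : Hgrp n)‖ ≤ ‖z‖ + ‖t‖ := h1
      _ ≤ (‖z‖ + 1) * (1 + ‖t‖) ^ 1 := by nlinarith

def sliceS (z : Fin n → ℂ) (f : SchwartzMap (Hgrp n) ℂ) : SchwartzMap ℝ ℂ :=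
  SchwartzMap.compCLM (𝕜 := ℝ) (g := fun t : ℝ => ((z, t) : Hgrp n))
    (sliceA_temperate n z)
    ⟨1, 1, fun t => by
      have : ‖t‖ ≤ ‖((z, t) : Hgrp n)‖ := norm_snd_le ((z, t) : Hgrp n)
      have h0 : (0:ℝ) ≤ ‖((z, t) : Hgrp n)‖ := norm_nonneg _
      calc ‖t‖ ≤ ‖((z, t) : Hgrp n)‖ := this
        _ ≤ 1 * (1 + ‖((z, t) : Hgrp n)‖) ^ 1 := by linarith⟩ f

@[simp] lemma sliceS_apply (z : Fin n → ℂ) (f : SchwartzMap (Hgrp n) ℂ) (t : ℝ) :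
    sliceS z f t = f (z, t) := rfl

lemma deriv_sliceS (z : Fin n → ℂ) (f : SchwartzMap (Hgrp n) ℂ) (t : ℝ) :
    deriv (⇑(sliceS z f)) t = fderiv ℝ (⇑f) (z, t) (0, 1) := by
  have hA : HasDerivAt (fun s : ℝ => ((z, s) : Hgrp n)) ((0 : Fin n → ℂ), (1 : ℝ)) t :=
    (hasDerivAt_const t z).prodMk (hasDerivAt_id t)
  have hc : HasDerivAt (fun s : ℝ => f (z, s)) (fderiv ℝ (⇑f) (z, t) ((0 : Fin n → ℂ), (1:ℝ))) t :=
    (f.differentiableAt.hasFDerivAt.comp_hasDerivAt t hA)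
  exact hc.deriv

open FourierTransform in
lemma slice_fourier_vanish (T : ℝ) (f : SchwartzMap (Hgrp n) ℂ)
    (hF : ∀ (z : Fin n → ℂ) (ξ : ℝ), T < ξ → pFourier (⇑f) z ξ = 0)
    (z : Fin n → ℂ) :
    ∀ om : ℝ, T < 2 * Real.pi * om → 𝓕 (⇑(sliceS z f)) om = 0 := by
  intro om hom
  have h1 : 𝓕 (⇑(sliceS z f)) om
      = ∫ t : ℝ, f (z, t) * Complex.exp (-Complex.I * (2 * Real.pi * om : ℝ) * t) := by
    rw [Real.fourier_real_eq_integral_exp_smul]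
    congr 1
    funext t
    rw [sliceS_apply, smul_eq_mul, mul_comm]
    congr 1
    congr 1
    push_cast
    ring
  have h2 := hF z (2 * Real.pi * om) hom
  rw [pFourier] at h2
  rcases smul_eq_zero.mp h2 with hc | hc
  · exfalso
    have : (0:ℝ) < Real.sqrt (2 * Real.pi) := Real.sqrt_pos.mpr (by positivity)
    exact (inv_ne_zero (ne_of_gt this)) hc
  · rw [h1]
    convert hc using 3
  
-- ## Part C: the low-frequency bound

lemma partC (T : ℝ) (f : SchwartzMap (Hgrp n) ℂ)
    (hF : ∀ (z : Fin n → ℂ) (ξ : ℝ), T < ξ → pFourier (⇑f) z ξ = 0) :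
    2 * (P (Dv E3 f) (conjS f)).im ≤ 2 * T * ∫ p : Hgrp n, ‖f p‖ ^ 2 := by
  have hprodInt : Integrable (fun p : Hgrp n => Dv E3 f p * (starRingEnd ℂ) (f p))
      (volume.prod volume) := by
    rw [← Measure.volume_eq_prod]
    exact integrable_mul_conj volume (Dv E3 f) f
  have hnormInt : Integrable (fun p : Hgrp n => ‖f p‖ ^ 2) (volume.prod volume) := by
    rw [← Measure.volume_eq_prod]
    exact integrable_normSq volume f
  set Sfun : (Fin n → ℂ) → ℂ :=
    fun z => ∫ t : ℝ, Dv E3 f (z, t) * (starRingEnd ℂ) (f (z, t)) with hSfun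
  set Ffun : (Fin n → ℂ) → ℝ := fun z => ∫ t : ℝ, ‖f (z, t)‖ ^ 2 with hFfun
  have hS : P (Dv E3 f) (conjS f) = ∫ z : Fin n → ℂ, Sfun z := by
    rw [P, Measure.volume_eq_prod]
    exact integral_prod _ hprodInt
  have hSint : Integrable Sfun volume := hprodInt.integral_prod_left
  have hFint : Integrable Ffun volume := hnormInt.integral_prod_left
  have hSim : (P (Dv E3 f) (conjS f)).im = ∫ z : Fin n → ℂ, (Sfun z).im := by
    rw [hS]
    exact (Complex.imCLM.integral_comp_comm hSint).symm
  have hFtot : ∫ p : Hgrp n, ‖f p‖ ^ 2 = ∫ z : Fin n → ℂ, Ffun z := by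
    rw [Measure.volume_eq_prod]
    exact integral_prod _ hnormInt
  have hpoint : ∀ z : Fin n → ℂ, 2 * (Sfun z).im ≤ 2 * T * Ffun z := by
    intro z
    have hvan := slice_fourier_vanish T f hF z
    have := oneD (sliceS z f) T hvan
    have hSz : Sfun z = ∫ t : ℝ, deriv (⇑(sliceS z f)) t * (starRingEnd ℂ) (sliceS z f t) := by
      show (∫ t : ℝ, Dv E3 f (z, t) * (starRingEnd ℂ) (f (z, t))) = _
      refine integral_congr_ae (Filter.Eventually.of_forall fun t => ?_)
      simp only []
      rw [deriv_sliceS, sliceS_apply]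
      rfl
    have hFz : Ffun z = ∫ t : ℝ, ‖sliceS z f t‖ ^ 2 := rfl
    rw [hSz, hFz]
    exact this
  have hint1 : Integrable (fun z : Fin n → ℂ => 2 * (Sfun z).im) volume := by
    have := (Complex.imCLM.integrable_comp hSint).const_mul (2:ℝ)
    exact this
  have hint2 : Integrable (fun z : Fin n → ℂ => 2 * T * Ffun z) volume :=
    hFint.const_mul _
  have hmono := integral_mono hint1 hint2 hpoint
  have e1 : ∫ z : Fin n → ℂ, 2 * (Sfun z).im = 2 * ∫ z : Fin n → ℂ, (Sfun z).im := by
    simpa [smul_eq_mul] using integral_smul (2:ℝ) (fun z : Fin n → ℂ => (Sfun z).im)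
  have e2 : ∫ z : Fin n → ℂ, 2 * T * Ffun z = 2 * T * ∫ z : Fin n → ℂ, Ffun z := by
    simpa [smul_eq_mul] using integral_smul (2*T) Ffun
  rw [e1, e2] at hmono
  rw [hSim, hFtot]
  exact hmono

end LowFreqAux

open LowFreqAux in
/-- low-frequency estimate. If f is Schwartz and Ff(z,ξ) = 0 for ξ > T,
then ∫|Lⱼf|² ≤ ∫|L̄ⱼf|² + 2T∫|f|². -/
theorem low_frequency_estimate (n : ℕ) (T : ℝ) (hT : 0 < T) (f : SchwartzMap (Hgrp n) ℂ)
    (hF : ∀ (z : Fin n → ℂ) (ξ : ℝ), T < ξ → pFourier (⇑f) z ξ = 0) (j : Fin n) :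
    ∫ p : Hgrp n, ‖Lop j (⇑f) p‖ ^ 2
      ≤ (∫ p : Hgrp n, ‖Lbar j (⇑f) p‖ ^ 2) + 2 * T * ∫ p : Hgrp n, ‖(⇑f) p‖ ^ 2 := by
  set g := conjS f with hg
  have e1 : ∫ p : Hgrp n, ‖Lop j (⇑f) p‖ ^ 2 = (P (LSm j f) (LbarSm j g)).re := by
    calc ∫ p : Hgrp n, ‖Lop j (⇑f) p‖ ^ 2
        = ∫ p : Hgrp n, Complex.reCLM (LSm j f p * LbarSm j g p) := by
          congr 1
          funext p
          rw [hg, ← conj_LSm, LSm_eq]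
          simp [Complex.mul_conj, Complex.normSq_eq_norm_sq,
            ← Complex.ofReal_pow]
      _ = Complex.reCLM (P (LSm j f) (LbarSm j g)) :=
          Complex.reCLM.integral_comp_comm (integrable_mulS volume _ _)
      _ = (P (LSm j f) (LbarSm j g)).re := rfl
  have e2 : ∫ p : Hgrp n, ‖Lbar j (⇑f) p‖ ^ 2 = (P (LbarSm j f) (LSm j g)).re := by
    calc ∫ p : Hgrp n, ‖Lbar j (⇑f) p‖ ^ 2
        = ∫ p : Hgrp n, Complex.reCLM (LbarSm j f p * LSm j g p) := by
          congr 1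
          funext p
          rw [hg, ← conj_LbarSm, LbarSm_eq]
          simp [Complex.mul_conj, Complex.normSq_eq_norm_sq,
            ← Complex.ofReal_pow]
      _ = Complex.reCLM (P (LbarSm j f) (LSm j g)) :=
          Complex.reCLM.integral_comp_comm (integrable_mulS volume _ _)
      _ = (P (LbarSm j f) (LSm j g)).re := rfl
  have hkey := key_identity j f g
  have hre : (P (LSm j f) (LbarSm j g)).re - (P (LbarSm j f) (LSm j g)).re
      = 2 * (P (Dv E3 f) g).im := by
    have := congrArg Complex.re hkey
    simpa [Complex.sub_re, Complex.mul_re, Complex.mul_im] using this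
  have hC := partC T f hF
  rw [hg] at *
  rw [e1, e2]
  have := hC
  linarith [hre, this]
end
end
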